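/- Let α > 1 and σ > 0 be real numbers, let s₂ < 2σ and let s₁ ∈ ℝ. Define a_n = |n|^{−(2σ−s₂)/2} if |n| = 2^k for some k ∈ ℕ, and a_n = 0 otherwise (n ∈ ℤ). Then (a_n) is square-summable, and the quantity S_N = Σ_{n ∈ ℤ, 0 < |n| ≤ 2N} ⟨n⟩^{−2s₂} | Σ_{m ∈ ℤ, |m| ≤ N, |n+m| ≤ N} ⟨n+m⟩^σ ⟨m⟩^σ ⟨ |n+m|^α − |m|^α ⟩^{−s₁} a_{n+m} a_m |² tends to +∞ as N → ∞. -/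

import Mathlib

open Real Filter Finset

noncomputable section

/-- The Japanese bracket `⟨x⟩ = (1 + x²)^{1/2}`. -/
def jb (x : ℝ) : ℝ := (1 + x ^ 2) ^ ((1:ℝ)/2)

open Classical in
/-- The lacunary coefficients `a_n = |n|^{−(2σ−s₂)/2}` when `|n|` is a power of
two, `a_n = 0` otherwise. -/
def lacunaryCoeff (σ s₂ : ℝ) (n : ℤ) : ℝ :=
  if ∃ k : ℕ, |n| = 2 ^ k then |(n : ℝ)| ^ (-((2 * σ - s₂) / 2)) else 0

/-!
For `s₂ < 2σ` the squares `a_{±2^k}² = 2^{-k(2σ - s₂)}` form a geometric series.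
For the divergence, each frequency `n = 2^{k+1} ≤ 2N` contains the resonant pair `m = -2^k`, on
which `|n + m|^α = |m|^α`, so the dispersive weight equals `1` whatever `α` and `s₁` are; with
`x = 2^k` that term alone contributes `⟨2x⟩^{-2s₂} (⟨x⟩^σ x^{-(2σ-s₂)/2})^4 ≍ x^{-2s₂} x^{2s₂} = 1`.
There are `≍ log₂ N` such frequencies, so `S_N ≳ log N`.
-/

lemma jb_pos (x : ℝ) : 0 < jb x := by unfold jb; positivity

lemma jb_zero : jb 0 = 1 := by simp [jb]

lemma jb_rpow_nonneg (x t : ℝ) : 0 ≤ jb x ^ t := rpow_nonneg (jb_pos x).le t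

lemma jb_neg (x : ℝ) : jb (-x) = jb x := by simp [jb]

lemma jb_eq_sqrt (x : ℝ) : jb x = √(1 + x ^ 2) := by
  rw [jb, sqrt_eq_rpow]

lemma le_jb (x : ℝ) : x ≤ jb x := by
  rw [jb_eq_sqrt]
  exact le_sqrt_of_sq_le (by linarith)

lemma jb_le_two_mul {x : ℝ} (hx : 1 ≤ x) : jb x ≤ 2 * x := by
  rw [jb_eq_sqrt]
  exact sqrt_le_iff.2 ⟨by linarith, by nlinarith⟩

lemma two_rpow_neg_abs_mul_le_jb_rpow {x : ℝ} (hx : 1 ≤ x) (t : ℝ) :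
    2 ^ (-|t|) * x ^ t ≤ jb x ^ t := by
  have hx0 : 0 < x := by linarith
  rcases le_or_gt 0 t with ht | ht
  · calc 2 ^ (-|t|) * x ^ t ≤ 1 * x ^ t := by
          gcongr
          exact rpow_le_one_of_one_le_of_nonpos one_le_two (by simp)
      _ ≤ jb x ^ t := by rw [one_mul]; gcongr; exact le_jb x
  · calc 2 ^ (-|t|) * x ^ t = (2 * x) ^ t := by
          rw [abs_of_neg ht, neg_neg, mul_rpow zero_le_two hx0.le]
      _ ≤ jb x ^ t := rpow_le_rpow_of_nonpos (jb_pos x) (jb_le_two_mul hx) ht.le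

section lacunary

variable {σ s₂ : ℝ}

lemma lacunaryCoeff_nonneg (n : ℤ) : 0 ≤ lacunaryCoeff σ s₂ n := by
  unfold lacunaryCoeff
  split_ifs
  exacts [rpow_nonneg (abs_nonneg _) _, le_rfl]

lemma lacunaryCoeff_neg (n : ℤ) : lacunaryCoeff σ s₂ (-n) = lacunaryCoeff σ s₂ n := by
  simp only [lacunaryCoeff, Int.cast_neg, abs_neg]
  congr 2
  simp only [abs_neg]

lemma lacunaryCoeff_two_pow (k : ℕ) :
    lacunaryCoeff σ s₂ (2 ^ k) = ((2:ℝ) ^ k) ^ (-((2 * σ - s₂) / 2)) := by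
  rw [lacunaryCoeff, if_pos ⟨k, abs_of_nonneg (by positivity)⟩]
  push_cast
  rw [abs_of_nonneg (by positivity)]

lemma lacunaryCoeff_two_pow_sq (k : ℕ) :
    lacunaryCoeff σ s₂ (2 ^ k) ^ 2 = ((2:ℝ) ^ (s₂ - 2 * σ)) ^ k := by
  rw [lacunaryCoeff_two_pow, ← rpow_natCast, ← rpow_mul (by positivity), ← rpow_natCast,
    ← rpow_mul zero_le_two, ← rpow_natCast, ← rpow_mul zero_le_two]
  congr 1
  ring

lemma lacunaryCoeff_natCast_eq_zero {n : ℕ} (hn : n ∉ Set.range (2 ^ · : ℕ → ℕ)) :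
    lacunaryCoeff σ s₂ n = 0 := by
  refine if_neg fun ⟨k, hk⟩ => hn ⟨k, ?_⟩
  rw [Nat.abs_cast] at hk
  exact_mod_cast hk.symm

lemma summable_lacunaryCoeff_sq (hs₂ : s₂ < 2 * σ) :
    Summable fun n : ℤ => lacunaryCoeff σ s₂ n ^ 2 := by
  have hnat : Summable fun n : ℕ => lacunaryCoeff σ s₂ n ^ 2 := by
    rw [← (Nat.pow_right_injective le_rfl).summable_iff fun n hn => by
      rw [lacunaryCoeff_natCast_eq_zero hn, sq, zero_mul]]
    simp only [Function.comp_def, Nat.cast_pow, Nat.cast_ofNat, lacunaryCoeff_two_pow_sq]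
    exact summable_geometric_of_lt_one (by positivity)
      (rpow_lt_one_of_one_lt_of_neg one_lt_two (by linarith))
  exact .of_nat_of_neg hnat (by simpa only [lacunaryCoeff_neg] using hnat)

end lacunary

section divergence

variable (α σ s₁ s₂ : ℝ)

def interactionSum (N : ℕ) (n : ℤ) : ℝ :=
  ∑ m ∈ (Finset.Icc (-(N : ℤ)) (N : ℤ)).filter (fun m => |n + m| ≤ (N : ℤ)),
    jb ((n + m : ℤ) : ℝ) ^ σ * jb ((m : ℤ) : ℝ) ^ σ
      * jb (|((n + m : ℤ) : ℝ)| ^ α - |((m : ℤ) : ℝ)| ^ α) ^ (-s₁)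
      * lacunaryCoeff σ s₂ (n + m) * lacunaryCoeff σ s₂ m

def renormalizedSquareNorm (N : ℕ) : ℝ :=
  ∑ n ∈ (Finset.Icc (-(2 * (N : ℤ))) (2 * (N : ℤ))).filter (fun n => n ≠ 0),
    jb (n : ℝ) ^ (-(2 * s₂)) * interactionSum α σ s₁ s₂ N n ^ 2

variable {α σ s₁ s₂}

lemma resonant_le_interactionSum {N k : ℕ} (hk : 2 ^ k ≤ N) :
    (jb (2 ^ k) ^ σ * (2 ^ k : ℝ) ^ (-((2 * σ - s₂) / 2))) ^ 2
      ≤ interactionSum α σ s₁ s₂ N (2 ^ (k + 1)) := by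
  have hkN : (2:ℤ) ^ k ≤ N := by exact_mod_cast hk
  have hsum : (2:ℤ) ^ (k + 1) + -2 ^ k = 2 ^ k := by ring
  have hmem : -2 ^ k ∈ (Finset.Icc (-(N : ℤ)) N).filter
      (fun m => |(2:ℤ) ^ (k + 1) + m| ≤ N) := by
    have : (0:ℤ) ≤ 2 ^ k := by positivity
    simp only [mem_filter, mem_Icc, hsum, abs_of_nonneg this]
    omega
  refine le_of_eq_of_le ?_ (single_le_sum (fun m _ => ?_) hmem)
  · rw [hsum, lacunaryCoeff_neg, lacunaryCoeff_two_pow]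
    push_cast
    rw [abs_neg, sub_self, jb_zero, one_rpow, jb_neg]
    ring
  · have := lacunaryCoeff_nonneg (σ := σ) (s₂ := s₂)
    exact mul_nonneg (mul_nonneg (mul_nonneg (mul_nonneg (jb_rpow_nonneg _ _)
      (jb_rpow_nonneg _ _)) (jb_rpow_nonneg _ _)) (this _)) (this _)

lemma resonant_weight_lower_bound {x : ℝ} (hx : 1 ≤ x) :
    2 ^ (-|-(2 * s₂)|) * 2 ^ (-(2 * s₂)) * (2 ^ (-|σ|)) ^ 4
      ≤ jb (2 * x) ^ (-(2 * s₂)) * ((jb x ^ σ * x ^ (-((2 * σ - s₂) / 2))) ^ 2) ^ 2 := by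
  have hx0 : 0 < x := by linarith
  have hpow : ((x ^ σ * x ^ (-((2 * σ - s₂) / 2))) ^ 2) ^ 2 = x ^ (2 * s₂) := by
    rw [← rpow_add hx0, ← pow_mul, ← rpow_mul_natCast hx0.le]
    congr 1
    push_cast
    ring
  have hcancel : x ^ (-(2 * s₂)) * x ^ (2 * s₂) = 1 := by
    rw [← rpow_add hx0, neg_add_cancel, rpow_zero]
  calc 2 ^ (-|-(2 * s₂)|) * 2 ^ (-(2 * s₂)) * (2 ^ (-|σ|)) ^ 4
      = 2 ^ (-|-(2 * s₂)|) * (2 * x) ^ (-(2 * s₂))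
          * ((2 ^ (-|σ|) * x ^ σ * x ^ (-((2 * σ - s₂) / 2))) ^ 2) ^ 2 := by
        rw [mul_rpow zero_le_two hx0.le]
        linear_combination (-(2 ^ (-|-(2 * s₂)|) * 2 ^ (-(2 * s₂)) * (2 ^ (-|σ|)) ^ 4) : ℝ)
          * (x ^ (-(2 * s₂)) * hpow + hcancel)
    _ ≤ jb (2 * x) ^ (-(2 * s₂)) * ((jb x ^ σ * x ^ (-((2 * σ - s₂) / 2))) ^ 2) ^ 2 := by
        gcongr
        · exact jb_rpow_nonneg _ _
        · exact two_rpow_neg_abs_mul_le_jb_rpow (by linarith) _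
        · exact two_rpow_neg_abs_mul_le_jb_rpow hx _

lemma resonant_term_lower_bound {N k : ℕ} (hk : 2 ^ k ≤ N) :
    2 ^ (-|-(2 * s₂)|) * 2 ^ (-(2 * s₂)) * (2 ^ (-|σ|)) ^ 4
      ≤ jb (((2 ^ (k + 1) : ℤ)) : ℝ) ^ (-(2 * s₂))
          * interactionSum α σ s₁ s₂ N (2 ^ (k + 1)) ^ 2 := by
  refine (resonant_weight_lower_bound (one_le_pow₀ (n := k) one_le_two)).trans ?_
  rw [Int.cast_pow, Int.cast_ofNat, pow_succ' (2:ℝ) k]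
  gcongr
  · exact jb_rpow_nonneg _ _
  · exact resonant_le_interactionSum hk

lemma mul_succ_le_renormalizedSquareNorm {N K : ℕ} (hK : 2 ^ K ≤ N) :
    2 ^ (-|-(2 * s₂)|) * 2 ^ (-(2 * s₂)) * (2 ^ (-|σ|)) ^ 4 * (K + 1)
      ≤ renormalizedSquareNorm α σ s₁ s₂ N := by
  set B := (range (K + 1)).image fun k => (2:ℤ) ^ (k + 1)
  have hinj : Function.Injective fun k : ℕ => (2:ℤ) ^ (k + 1) :=
    fun a b h => Nat.succ_injective (pow_right_injective₀ two_pos (by norm_num) h)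
  have hle {k : ℕ} (hk : k ∈ range (K + 1)) : 2 ^ k ≤ N :=
    (Nat.pow_le_pow_right two_pos (Nat.lt_succ_iff.1 (mem_range.1 hk))).trans hK
  have hsub : B ⊆ (Icc (-(2 * (N : ℤ))) (2 * (N : ℤ))).filter (fun n => n ≠ 0) := by
    simp only [B, image_subset_iff, mem_filter, mem_Icc]
    intro k hk
    have : (2:ℤ) ^ k ≤ N := by exact_mod_cast hle hk
    have : (0:ℤ) < 2 ^ k := by positivity
    rw [pow_succ']
    omega
  calc (2:ℝ) ^ (-|-(2 * s₂)|) * 2 ^ (-(2 * s₂)) * (2 ^ (-|σ|)) ^ 4 * (K + 1)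
      = #B • (2 ^ (-|-(2 * s₂)|) * 2 ^ (-(2 * s₂)) * (2 ^ (-|σ|)) ^ 4) := by
        rw [card_image_of_injective _ hinj, card_range, nsmul_eq_mul]
        push_cast
        ring
    _ ≤ ∑ n ∈ B, jb (n : ℝ) ^ (-(2 * s₂)) * interactionSum α σ s₁ s₂ N n ^ 2 := by
        refine card_nsmul_le_sum _ _ _ fun n hn => ?_
        obtain ⟨k, hk, rfl⟩ := mem_image.1 hn
        exact resonant_term_lower_bound (hle hk)
    _ ≤ renormalizedSquareNorm α σ s₁ s₂ N :=
        sum_le_sum_of_subset_of_nonneg hsub fun n _ _ =>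
          mul_nonneg (jb_rpow_nonneg _ _) (sq_nonneg _)

lemma tendsto_renormalizedSquareNorm :
    Tendsto (renormalizedSquareNorm α σ s₁ s₂) atTop atTop := by
  set C : ℝ := 2 ^ (-|-(2 * s₂)|) * 2 ^ (-(2 * s₂)) * (2 ^ (-|σ|)) ^ 4
  have hC : 0 < C := by positivity
  refine tendsto_atTop.2 fun b => ?_
  obtain ⟨K, hK⟩ := exists_nat_ge (b / C)
  filter_upwards [eventually_ge_atTop (2 ^ K)] with N hN
  calc b ≤ C * (K + 1) := by
        rw [div_le_iff₀ hC] at hK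
        linarith
    _ ≤ renormalizedSquareNorm α σ s₁ s₂ N := mul_succ_le_renormalizedSquareNorm hN

end divergence

theorem optimality_space_regularity_general
    (α σ s₁ s₂ : ℝ) (hs₂ : s₂ < 2 * σ) :
    Summable (fun n : ℤ => lacunaryCoeff σ s₂ n ^ 2) ∧
    Tendsto
      (fun N : ℕ =>
        ∑ n ∈ (Finset.Icc (-(2 * (N : ℤ))) (2 * (N : ℤ))).filter
            (fun n => n ≠ 0),
          jb (n : ℝ) ^ (-(2 * s₂)) *
            (∑ m ∈ (Finset.Icc (-(N : ℤ)) (N : ℤ)).filter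
                (fun m => |n + m| ≤ (N : ℤ)),
              jb ((n + m : ℤ) : ℝ) ^ σ * jb ((m : ℤ) : ℝ) ^ σ
                * jb (|((n + m : ℤ) : ℝ)| ^ α - |((m : ℤ) : ℝ)| ^ α) ^ (-s₁)
                * lacunaryCoeff σ s₂ (n + m) * lacunaryCoeff σ s₂ m) ^ 2)
      atTop atTop :=
  ⟨summable_lacunaryCoeff_sq hs₂, tendsto_renormalizedSquareNorm⟩

/-- Optimality of the spatial regularity exponent `s₂ = 2σ`: for `s₂ < 2σ`, the
lacunary coefficients are square-summable, yet
`S_N = ‖⟨D_t⟩^{−s₁} f_N(0,·)‖²_{H^{−s₂}}` diverges. -/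
theorem optimality_space_regularity
    (α σ s₁ s₂ : ℝ) (hα : 1 < α) (hσ : 0 < σ) (hs₂ : s₂ < 2 * σ) :
    Summable (fun n : ℤ => lacunaryCoeff σ s₂ n ^ 2) ∧
    Tendsto
      (fun N : ℕ =>
        ∑ n ∈ (Finset.Icc (-(2 * (N : ℤ))) (2 * (N : ℤ))).filter
            (fun n => n ≠ 0),
          jb (n : ℝ) ^ (-(2 * s₂)) *
            (∑ m ∈ (Finset.Icc (-(N : ℤ)) (N : ℤ)).filter
                (fun m => |n + m| ≤ (N : ℤ)),
              jb ((n + m : ℤ) : ℝ) ^ σ * jb ((m : ℤ) : ℝ) ^ σ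
                * jb (|((n + m : ℤ) : ℝ)| ^ α - |((m : ℤ) : ℝ)| ^ α) ^ (-s₁)
                * lacunaryCoeff σ s₂ (n + m) * lacunaryCoeff σ s₂ m) ^ 2)
      atTop atTop :=
  optimality_space_regularity_general α σ s₁ s₂ hs₂

end
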